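/- Let A be a commutative C*-algebra with unit e and let M be a Hilbert A-module, and suppose there exist x₀ ∈ M and f₀ ∈ M' with f₀(x₀) = e. Then every element of L = span{θ_{x,f₀} : x ∈ M} is an A-linear combination of idempotents lying in L, and every element of R = span{θ_{x₀,f} : f ∈ M'} is an A-linear combination of idempotents lying in R. -/

import Mathlib

/-!
For an `A`-linear `f` with `f x = 1`, the rank-one operator `θ_{x,f} = f.smulRight x` is
idempotent, since `θ_{x,f} θ_{y,g} = θ_{f(y) x, g}` (this uses that `A` is commutative).
Given `θ_{x,f₀} ∈ 𝓛`, adding `(1 - f₀ x) • θ_{x₀,f₀}` gives `θ_{x',f₀}` with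
`x' = x + (1 - f₀ x) • x₀` and `f₀ x' = 1`, so `θ_{x,f₀}` is a combination of the two idempotents
`θ_{x',f₀}` and `θ_{x₀,f₀}` of `𝓛`. Symmetrically, `θ_{x₀,f} ∈ 𝓡` is a combination of
`θ_{x₀,f'}` and `θ_{x₀,f₀}` with `f' = f + (1 - f x₀) • f₀`.
-/

set_option synthInstance.maxHeartbeats 1000000
set_option maxHeartbeats 1000000

/-- `𝓛 = span {θ_{x,f₀} : x ∈ M}`. -/
noncomputable def Lset (A : Type*) (M : Type*) [CStarAlgebra A] [NormedAddCommGroup M]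
    [NormedSpace ℂ M] [Module A M] [IsScalarTower ℂ A M] [IsBoundedSMul A M]
    (f₀ : M →L[ℂ] A) : Submodule ℂ (M →L[ℂ] M) :=
  Submodule.span ℂ {S | ∃ x : M, S = f₀.smulRight x}

/-- `𝓡 = span {θ_{x₀,f} : f ∈ M'}`. -/
noncomputable def Rset (A : Type*) (M : Type*) [CStarAlgebra A] [NormedAddCommGroup M]
    [NormedSpace ℂ M] [Module A M] [IsScalarTower ℂ A M] [IsBoundedSMul A M]
    (x₀ : M) : Submodule ℂ (M →L[ℂ] M) :=
  Submodule.span ℂ {S | ∃ f : M →L[ℂ] A,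
    (∀ (a : A) (m : M), f (a • m) = a * f m) ∧ S = f.smulRight x₀}

theorem exists_sum_smul_idempotents_of_add_smul {R X : Type*} [Ring R] [AddCommGroup X]
    [Module R X] [Mul X] {S : Set X} {T E : X} (a : R) (hE : E ∈ S ∧ E * E = E)
    (hTE : T + a • E ∈ S ∧ (T + a • E) * (T + a • E) = T + a • E) :
    ∃ (n : ℕ) (c : Fin n → R) (P : Fin n → X),
      (∀ i, P i ∈ S ∧ P i * P i = P i) ∧ T = ∑ i, c i • P i := by
  refine ⟨2, ![1, -a], ![T + a • E, E], fun i => ?_, ?_⟩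
  · fin_cases i
    exacts [hTE, hE]
  · simp

namespace ContinuousLinearMap

section
variable {R S M : Type*} [Semiring R] [CommSemiring S] [TopologicalSpace S] [TopologicalSpace M]
  [AddCommMonoid M] [Module R M] [Module S M] [Module R S] [IsScalarTower R S M]
  [ContinuousSMul S M]

theorem smulRight_mul_smulRight {f : M →L[R] S} (hf : ∀ (a : S) (m : M), f (a • m) = a * f m)
    (g : M →L[R] S) (x y : M) :
    f.smulRight x * g.smulRight y = g.smulRight (f y • x) := by
  ext m
  simp [hf, smul_smul, mul_comm]

theorem isIdempotentElem_smulRight {f : M →L[R] S} (hf : ∀ (a : S) (m : M), f (a • m) = a * f m)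
    {x : M} (hx : f x = 1) : IsIdempotentElem (f.smulRight x) := by
  rw [IsIdempotentElem, smulRight_mul_smulRight hf, hx, one_smul]

section
variable {T : Type*} [Monoid T] [DistribMulAction T S] [DistribMulAction T M]
  [IsScalarTower T S M] [ContinuousConstSMul T S] [ContinuousConstSMul T M]
  [SMulCommClass R T S] [SMulCommClass R T M]

theorem smul_smulRight (c : T) (f : M →L[R] S) (x : M) :
    (c • f).smulRight x = c • f.smulRight x := by
  ext m
  simp [smul_assoc]

end

variable [ContinuousAdd S] [ContinuousAdd M]

theorem add_smulRight (f g : M →L[R] S) (x : M) :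
    (f + g).smulRight x = f.smulRight x + g.smulRight x := by
  ext m
  simp [add_smul]

end
end ContinuousLinearMap

open ContinuousLinearMap

section
variable {A M : Type*} [CommCStarAlgebra A] [NormedAddCommGroup M] [NormedSpace ℂ M]
  [Module A M] [IsScalarTower ℂ A M] [IsBoundedSMul A M]

theorem mem_Lset_iff {f₀ : M →L[ℂ] A} {T : M →L[ℂ] M} :
    T ∈ Lset A M f₀ ↔ ∃ x : M, T = f₀.smulRight x := by
  have hrange : {S | ∃ x : M, S = f₀.smulRight x} =
      (LinearMap.range (smulRightₗ f₀ : M →ₗ[ℂ] M →L[ℂ] M) : Set (M →L[ℂ] M)) := by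
    ext S
    simp [eq_comm]
  rw [Lset, hrange, Submodule.span_eq]
  simp [eq_comm]

theorem mem_Rset_iff {x₀ : M} {T : M →L[ℂ] M} :
    T ∈ Rset A M x₀ ↔
      ∃ f : M →L[ℂ] A, (∀ (a : A) (m : M), f (a • m) = a * f m) ∧ T = f.smulRight x₀ := by
  refine ⟨fun hT => ?_, fun hT => Submodule.subset_span hT⟩
  induction hT using Submodule.span_induction with
  | mem S hS => exact hS
  | zero => exact ⟨0, by simp, by simp⟩
  | add S S' _ _ hS hS' =>
    obtain ⟨f, hf, rfl⟩ := hS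
    obtain ⟨g, hg, rfl⟩ := hS'
    exact ⟨f + g, by simp [hf, hg, mul_add], (add_smulRight f g x₀).symm⟩
  | smul c S _ hS =>
    obtain ⟨f, hf, rfl⟩ := hS
    exact ⟨c • f, by simp [hf], (smul_smulRight c f x₀).symm⟩

theorem exists_Lset_idempotents_sum_smul_eq_smulRight {x₀ : M} {f₀ : M →L[ℂ] A}
    (hf₀ : ∀ (a : A) (m : M), f₀ (a • m) = a * f₀ m) (hx₀f₀ : f₀ x₀ = 1) (x : M) :
    ∃ (n : ℕ) (a : Fin n → A) (P : Fin n → (M →L[ℂ] M)),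
      (∀ i, P i ∈ Lset A M f₀ ∧ P i * P i = P i) ∧ f₀.smulRight x = ∑ i, a i • P i := by
  have hsum : f₀.smulRight x + (1 - f₀ x) • f₀.smulRight x₀ =
      f₀.smulRight (x + (1 - f₀ x) • x₀) := by
    rw [← coe_smulRightₗ (T := A), map_add, map_smul]
  refine exists_sum_smul_idempotents_of_add_smul (1 - f₀ x)
    ⟨mem_Lset_iff.2 ⟨x₀, rfl⟩, isIdempotentElem_smulRight hf₀ hx₀f₀⟩
    ⟨mem_Lset_iff.2 ⟨_, hsum⟩, ?_⟩
  rw [hsum]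
  exact isIdempotentElem_smulRight hf₀ (by simp [hf₀, hx₀f₀])

theorem exists_Rset_idempotents_sum_smul_eq_smulRight {x₀ : M} {f₀ f : M →L[ℂ] A}
    (hf₀ : ∀ (a : A) (m : M), f₀ (a • m) = a * f₀ m) (hx₀f₀ : f₀ x₀ = 1)
    (hf : ∀ (a : A) (m : M), f (a • m) = a * f m) :
    ∃ (n : ℕ) (a : Fin n → A) (P : Fin n → (M →L[ℂ] M)),
      (∀ i, P i ∈ Rset A M x₀ ∧ P i * P i = P i) ∧ f.smulRight x₀ = ∑ i, a i • P i := by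
  set g := f + (1 - f x₀) • f₀
  have hg : ∀ (a : A) (m : M), g (a • m) = a * g m := by
    intro a m
    simp only [g, add_apply, smul_apply, hf, hf₀, smul_eq_mul]
    ring
  have hsum : f.smulRight x₀ + (1 - f x₀) • f₀.smulRight x₀ = g.smulRight x₀ := by
    rw [add_smulRight, smul_smulRight]
  refine exists_sum_smul_idempotents_of_add_smul (1 - f x₀)
    ⟨mem_Rset_iff.2 ⟨f₀, hf₀, rfl⟩, isIdempotentElem_smulRight hf₀ hx₀f₀⟩
    ⟨mem_Rset_iff.2 ⟨g, hg, hsum⟩, ?_⟩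
  rw [hsum]
  exact isIdempotentElem_smulRight hg (by simp [g, hx₀f₀])

end

variable {A : Type*} [CommCStarAlgebra A] [PartialOrder A] [StarOrderedRing A]
variable {M : Type*} [NormedAddCommGroup M] [CompleteSpace M] [NormedSpace ℂ M]
  [Module A M] [IsScalarTower ℂ A M] [IsBoundedSMul A M]

theorem Lset_Rset_spanned_by_idempotents_general
    (x₀ : M) (f₀ : M →L[ℂ] A)
    (hf₀ : ∀ (a : A) (m : M), f₀ (a • m) = a * f₀ m)
    (hx₀f₀ : f₀ x₀ = 1)
    :
    (∀ T : M →L[ℂ] M, T ∈ Lset A M f₀ →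
      ∃ (n : ℕ) (a : Fin n → A) (P : Fin n → (M →L[ℂ] M)),
        (∀ i, P i ∈ Lset A M f₀ ∧ P i * P i = P i) ∧ T = ∑ i, a i • P i) ∧
    (∀ T : M →L[ℂ] M, T ∈ Rset A M x₀ →
      ∃ (n : ℕ) (a : Fin n → A) (P : Fin n → (M →L[ℂ] M)),
        (∀ i, P i ∈ Rset A M x₀ ∧ P i * P i = P i) ∧ T = ∑ i, a i • P i) := by
  refine ⟨fun T hT => ?_, fun T hT => ?_⟩
  · obtain ⟨x, rfl⟩ := mem_Lset_iff.1 hT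
    exact exists_Lset_idempotents_sum_smul_eq_smulRight hf₀ hx₀f₀ x
  · obtain ⟨f, hf, rfl⟩ := mem_Rset_iff.1 hT
    exact exists_Rset_idempotents_sum_smul_eq_smulRight hf₀ hx₀f₀ hf

/-- **Lemma 9 (2).** Each element of `𝓛` is an `A`-linear combination of idempotents in `𝓛`,
and each element of `𝓡` is an `A`-linear combination of idempotents in `𝓡`. -/
theorem Lset_Rset_spanned_by_idempotents
    (inn : M → M → A)
    (inn_add_left : ∀ x y z : M, inn (x + y) z = inn x z + inn y z)
    (inn_smul_left : ∀ (a : A) (x y : M), inn (a • x) y = a * inn x y)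
    (inn_star : ∀ x y : M, inn x y = star (inn y x))
    (inn_self_nonneg : ∀ x : M, 0 ≤ inn x x)
    (inn_definite : ∀ x : M, inn x x = 0 → x = 0)
    (norm_eq : ∀ x : M, ‖x‖ = Real.sqrt ‖inn x x‖)
    (x₀ : M) (f₀ : M →L[ℂ] A)
    (hf₀ : ∀ (a : A) (m : M), f₀ (a • m) = a * f₀ m)
    (hx₀f₀ : f₀ x₀ = 1)
    :
    (∀ T : M →L[ℂ] M, T ∈ Lset A M f₀ →
      ∃ (n : ℕ) (a : Fin n → A) (P : Fin n → (M →L[ℂ] M)),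
        (∀ i, P i ∈ Lset A M f₀ ∧ P i * P i = P i) ∧ T = ∑ i, a i • P i) ∧
    (∀ T : M →L[ℂ] M, T ∈ Rset A M x₀ →
      ∃ (n : ℕ) (a : Fin n → A) (P : Fin n → (M →L[ℂ] M)),
        (∀ i, P i ∈ Rset A M x₀ ∧ P i * P i = P i) ∧ T = ∑ i, a i • P i) :=
  Lset_Rset_spanned_by_idempotents_general x₀ f₀ hf₀ hx₀f₀
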